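/- arXiv:1711.05157 — 2 statements merged into one kernel-verified Lean document; each statement's English description precedes it below -/
import Mathlib

section
/- The set A is an independent set in G' of size 2k + 2·C(k,2). -/
/-- Vertex names for the graph `G'` built from a Multicolored Clique instance. -/
inductive MV (k p : ℕ) : Type where
  | z : Fin k → Fin p → MV k p
  | r : Fin k → Fin k → Fin p → Fin p → MV k p
  | ax : Fin k → MV k p
  | ay : Fin k → MV k p
  | bx : Fin k → Fin k → MV k p
  | byy : Fin k → Fin k → MV k p
  | beta : MV k p

/-- Which vertex names actually occur as vertices of `G'`. -/
def MVValid {k p : ℕ} (G : SimpleGraph (Fin k × Fin p)) : MV k p → Prop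
  | MV.r i j s t => i < j ∧ G.Adj (i, s) (j, t)
  | MV.bx i j => i < j
  | MV.byy i j => i < j
  | _ => True

/-- The vertex set of `G'`. -/
abbrev MVert (k p : ℕ) (G : SimpleGraph (Fin k × Fin p)) : Type :=
  {v : MV k p // MVValid G v}

/-- One direction of the adjacency relation of `G'` (it is symmetrized below). -/
def MVAdj {k p : ℕ} : MV k p → MV k p → Prop
  | MV.z i s, MV.z i' s' => i = i' ∧ s ≠ s'
  | MV.r i j s t, MV.r i' j' s' t' => i = i' ∧ j = j' ∧ (s ≠ s' ∨ t ≠ t')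
  | MV.z i h, MV.r i' j' s t => (i = i' ∧ h ≠ s) ∨ (i = j' ∧ h ≠ t)
  | MV.ax i, MV.z i' _ => i = i'
  | MV.ay i, MV.z i' _ => i = i'
  | MV.bx i j, MV.r i' j' _ _ => i = i' ∧ j = j'
  | MV.byy i j, MV.r i' j' _ _ => i = i' ∧ j = j'
  | MV.beta, MV.z _ _ => True
  | MV.beta, MV.r _ _ _ _ => True
  | _, _ => False

/-- The graph `G'`. -/
def Gp {k p : ℕ} (G : SimpleGraph (Fin k × Fin p)) : SimpleGraph (MVert k p G) :=
  SimpleGraph.fromRel (fun a b => MVAdj a.1 b.1)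

/-- The set `Z(i)`. -/
def Zset {k p : ℕ} (G : SimpleGraph (Fin k × Fin p)) (i : Fin k) : Set (MVert k p G) :=
  {v | ∃ s, v.1 = MV.z i s}

/-- The set `R(i,j)`. -/
def Rset {k p : ℕ} (G : SimpleGraph (Fin k × Fin p)) (i j : Fin k) : Set (MVert k p G) :=
  {v | ∃ s t, v.1 = MV.r i j s t}

/-- The set `Z_{+α}(i)`. -/
def ZAset {k p : ℕ} (G : SimpleGraph (Fin k × Fin p)) (i : Fin k) : Set (MVert k p G) :=
  Zset G i ∪ {v | v.1 = MV.ax i ∨ v.1 = MV.ay i}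

/-- The set `R_{+α}(i,j)`. -/
def RAset {k p : ℕ} (G : SimpleGraph (Fin k × Fin p)) (i j : Fin k) : Set (MVert k p G) :=
  Rset G i j ∪ {v | v.1 = MV.bx i j ∨ v.1 = MV.byy i j}

/-- The set `A` of all `α`-vertices. -/
def Aset {k p : ℕ} (G : SimpleGraph (Fin k × Fin p)) : Set (MVert k p G) :=
  {v | (∃ i, v.1 = MV.ax i ∨ v.1 = MV.ay i) ∨ (∃ i j, v.1 = MV.bx i j ∨ v.1 = MV.byy i j)}

/-- `F` is an induced forest in `G'`: the induced subgraph has no cycle. -/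
def IsInducedForest {k p : ℕ} (G : SimpleGraph (Fin k × Fin p))
    (F : Set (MVert k p G)) : Prop :=
  ((Gp G).induce F).IsAcyclic

lemma cardS (k : ℕ) : Nat.card {q : Fin k × Fin k // q.1 < q.2} = Nat.choose k 2 := by
  have e : {q : Fin k × Fin k // q.1 < q.2} ≃ Σ j : Fin k, Fin j.val :=
    { toFun := fun q => ⟨q.1.2, ⟨q.1.1.val, q.2⟩⟩
      invFun := fun x => ⟨(⟨x.2.val, x.2.isLt.trans x.1.isLt⟩, x.1), x.2.isLt⟩
      left_inv := fun q => by ext <;> rfl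
      right_inv := fun x => by rfl }
  rw [Nat.card_congr e, Nat.card_eq_fintype_card, Fintype.card_sigma, Nat.choose_two_right]
  simp only [Fintype.card_fin]
  rw [Fin.sum_univ_eq_sum_range (fun i => i), Finset.sum_range_id]

def afun {k p : ℕ} (G : SimpleGraph (Fin k × Fin p)) :
    ((Fin k ⊕ Fin k) ⊕ ({q : Fin k × Fin k // q.1 < q.2} ⊕
      {q : Fin k × Fin k // q.1 < q.2})) → (Aset G : Set (MVert k p G))
  | .inl (.inl i) => ⟨⟨MV.ax i, trivial⟩, Or.inl ⟨i, Or.inl rfl⟩⟩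
  | .inl (.inr i) => ⟨⟨MV.ay i, trivial⟩, Or.inl ⟨i, Or.inr rfl⟩⟩
  | .inr (.inl q) => ⟨⟨MV.bx q.1.1 q.1.2, q.2⟩, Or.inr ⟨q.1.1, q.1.2, Or.inl rfl⟩⟩
  | .inr (.inr q) => ⟨⟨MV.byy q.1.1 q.1.2, q.2⟩, Or.inr ⟨q.1.1, q.1.2, Or.inr rfl⟩⟩

lemma afun_bij {k p : ℕ} (G : SimpleGraph (Fin k × Fin p)) :
    Function.Bijective (afun G) := by
  constructor
  · rintro ((a|a)|(a|a)) ((b|b)|(b|b)) h <;>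
      simp_all [afun, Subtype.ext_iff, Prod.ext_iff]
  · rintro ⟨⟨w, hw⟩, hA⟩
    rcases hA with ⟨i, h | h⟩ | ⟨i, j, h | h⟩ <;> simp only at h <;> subst h
    · exact ⟨.inl (.inl i), rfl⟩
    · exact ⟨.inl (.inr i), rfl⟩
    · exact ⟨.inr (.inl ⟨(i, j), hw⟩), rfl⟩
    · exact ⟨.inr (.inr ⟨(i, j), hw⟩), rfl⟩

/-- `A` is an independent set in `G'` of size `2k + 2·C(k,2)`. -/
theorem stmt3 (k p : ℕ) (hk : 2 ≤ k) (hp : 1 ≤ p) (G : SimpleGraph (Fin k × Fin p)) :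
    ((Aset G).Pairwise fun a b => ¬ (Gp G).Adj a b) ∧
      (Aset G).ncard = 2 * k + 2 * Nat.choose k 2 := by
  constructor
  · intro a ha b hb hab hadj
    rw [Gp, SimpleGraph.fromRel_adj] at hadj
    have key : ∀ x y : MVert k p G, x ∈ Aset G → ¬ MVAdj y.1 x.1 := by
      rintro x y (⟨i, h | h⟩ | ⟨i, j, h | h⟩) hm <;>
        · rw [h] at hm
          rcases hy : y.1 with _|_|_|_|_|_|_ <;> rw [hy] at hm <;> exact hm
    exact (hadj.2).elim (key b a hb) (key a b ha)
  · rw [← Nat.card_coe_set_eq, ← Nat.card_eq_of_bijective _ (afun_bij G)]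
    rw [Nat.card_sum, Nat.card_sum, Nat.card_sum, cardS, Nat.card_eq_fintype_card,
      Fintype.card_fin]
    ring
end

section
/- Let F be an induced forest in G' with exactly k' = 3k + 3·C(k,2) + 1 vertices, let 1 ≤ i < j ≤ k and s_i, s_j, t_i, t_j ∈ [p]. If z^i_{s_i} ∈ F, z^j_{s_j} ∈ F and r^{(i,j)}_{t_i,t_j} ∈ F, then s_i = t_i and s_j = t_j. -/
section MyAux

lemma no_triangle' {V : Type*} {G : SimpleGraph V} (h : G.IsAcyclic) {a b c : V}
    (hab : G.Adj a b) (hbc : G.Adj b c) (hca : G.Adj c a) : False := by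
  have hcyc : (SimpleGraph.Walk.cons hab (SimpleGraph.Walk.cons hbc
      (SimpleGraph.Walk.cons hca SimpleGraph.Walk.nil))).IsCycle := by
    simp [SimpleGraph.Walk.isCycle_def, SimpleGraph.Walk.isTrail_def,
      hab.ne, hbc.ne, hca.ne, hab.ne', hbc.ne', hca.ne']
  exact h _ hcyc

lemma pairs_card (k : ℕ) :
    (Finset.univ.filter (fun q : Fin k × Fin k => q.1 < q.2)).card = k.choose 2 := by
  classical
  rw [Finset.card_eq_sum_card_fiberwise (f := Prod.snd) (t := Finset.univ)
    (fun x _ => Finset.mem_univ _)]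
  have h : ∀ j : Fin k, ((Finset.univ.filter (fun q : Fin k × Fin k => q.1 < q.2)).filter
      (fun q => q.2 = j)).card = (j : ℕ) := by
    intro j
    rw [← Fin.card_Iio (b := j)]
    apply Finset.card_bij (fun a _ => a.1)
    · rintro ⟨a, b⟩ ha
      simp only [Finset.mem_filter, Finset.mem_univ, true_and] at ha
      simp [Finset.mem_Iio, ha.2 ▸ ha.1]
    · rintro ⟨a, b⟩ ha ⟨a', b'⟩ ha' hh
      simp only [Finset.mem_filter, Finset.mem_univ, true_and] at ha ha'
      simp_all [Prod.ext_iff]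
    · intro b hb
      exact ⟨(b, j), by simp [Finset.mem_Iio.mp hb], rfl⟩
  simp_rw [h]
  rw [Fin.sum_univ_eq_sum_range (fun i => i), Finset.sum_range_id, Nat.choose_two_right]

variable {k p : ℕ} {G : SimpleGraph (Fin k × Fin p)} {F : Set (MVert k p G)}

lemma gp_adj {a b : MVert k p G} (hne : a.1 ≠ b.1)
    (h : MVAdj a.1 b.1 ∨ MVAdj b.1 a.1) : (Gp G).Adj a b := by
  rw [Gp, SimpleGraph.fromRel_adj]
  exact ⟨fun h' => hne (congrArg Subtype.val h'), h⟩

lemma triF (hF : IsInducedForest G F) {a b c : MVert k p G}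
    (ha : a ∈ F) (hb : b ∈ F) (hc : c ∈ F)
    (hab : (Gp G).Adj a b) (hbc : (Gp G).Adj b c) (hca : (Gp G).Adj c a) : False :=
  no_triangle' hF (a := ⟨a, ha⟩) (b := ⟨b, hb⟩) (c := ⟨c, hc⟩) hab hbc hca

lemma adj_zz {a b : MVert k p G} {i : Fin k} {s s' : Fin p}
    (ha : a.1 = MV.z i s) (hb : b.1 = MV.z i s') (h : s ≠ s') : (Gp G).Adj a b :=
  gp_adj (by rw [ha, hb]; simp [h]) (Or.inl (by rw [ha, hb]; exact ⟨rfl, h⟩))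

lemma adj_az {a b : MVert k p G} {i : Fin k} {s : Fin p}
    (ha : a.1 = MV.ax i ∨ a.1 = MV.ay i) (hb : b.1 = MV.z i s) : (Gp G).Adj a b := by
  rcases ha with ha | ha
  · exact gp_adj (by rw [ha, hb]; simp) (Or.inl (by rw [ha, hb]; exact rfl))
  · exact gp_adj (by rw [ha, hb]; simp) (Or.inl (by rw [ha, hb]; exact rfl))

lemma adj_rr {a b : MVert k p G} {i j : Fin k} {s t s' t' : Fin p}
    (ha : a.1 = MV.r i j s t) (hb : b.1 = MV.r i j s' t') (h : s ≠ s' ∨ t ≠ t') :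
    (Gp G).Adj a b := by
  refine gp_adj ?_ (Or.inl (by rw [ha, hb]; exact ⟨rfl, rfl, h⟩))
  rw [ha, hb]
  rcases h with h | h <;> simp [h]

lemma adj_br {a b : MVert k p G} {i j : Fin k} {s t : Fin p}
    (ha : a.1 = MV.bx i j ∨ a.1 = MV.byy i j) (hb : b.1 = MV.r i j s t) : (Gp G).Adj a b := by
  rcases ha with ha | ha
  · exact gp_adj (by rw [ha, hb]; simp) (Or.inl (by rw [ha, hb]; exact ⟨rfl, rfl⟩))
  · exact gp_adj (by rw [ha, hb]; simp) (Or.inl (by rw [ha, hb]; exact ⟨rfl, rfl⟩))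

lemma adj_beta_z {a b : MVert k p G} {i : Fin k} {s : Fin p}
    (ha : a.1 = MV.beta) (hb : b.1 = MV.z i s) : (Gp G).Adj a b :=
  gp_adj (by rw [ha, hb]; simp) (Or.inl (by rw [ha, hb]; trivial))

lemma adj_beta_r {a b : MVert k p G} {i j : Fin k} {s t : Fin p}
    (ha : a.1 = MV.beta) (hb : b.1 = MV.r i j s t) : (Gp G).Adj a b :=
  gp_adj (by rw [ha, hb]; simp) (Or.inl (by rw [ha, hb]; trivial))

lemma adj_zr_fst {a b : MVert k p G} {i j : Fin k} {h s t : Fin p}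
    (ha : a.1 = MV.z i h) (hb : b.1 = MV.r i j s t) (hne : h ≠ s) : (Gp G).Adj a b :=
  gp_adj (by rw [ha, hb]; simp) (Or.inl (by rw [ha, hb]; exact Or.inl ⟨rfl, hne⟩))

lemma adj_zr_snd {a b : MVert k p G} {i j : Fin k} {h s t : Fin p}
    (ha : a.1 = MV.z j h) (hb : b.1 = MV.r i j s t) (hne : h ≠ t) : (Gp G).Adj a b :=
  gp_adj (by rw [ha, hb]; simp) (Or.inl (by rw [ha, hb]; exact Or.inr ⟨rfl, hne⟩))

/-- The classification map. -/
def cls {k p : ℕ} {G : SimpleGraph (Fin k × Fin p)} (v : MVert k p G) :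
    Fin k ⊕ (Fin k × Fin k) ⊕ Unit :=
  match v.1 with
  | MV.z i _ => Sum.inl i
  | MV.ax i => Sum.inl i
  | MV.ay i => Sum.inl i
  | MV.r i j _ _ => Sum.inr (Sum.inl (i, j))
  | MV.bx i j => Sum.inr (Sum.inl (i, j))
  | MV.byy i j => Sum.inr (Sum.inl (i, j))
  | MV.beta => Sum.inr (Sum.inr ())

lemma fiberZ (hF : IsInducedForest G F) (T : Finset (MVert k p G)) (hT : ∀ v ∈ T, v ∈ F)
    (i : Fin k) : (T.filter (fun v => cls v = Sum.inl i)).card ≤ 3 := by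
  classical
  set S := T.filter (fun v => cls v = Sum.inl i) with hS
  set P : MVert k p G → Prop := fun v => ∃ s, v.1 = MV.z i s with hP
  have key := Finset.card_filter_add_card_filter_not (s := S) (p := P)
  set Sz := S.filter P with hSz
  set Sa := S.filter (fun v => ¬ P v) with hSa
  have hmemF : ∀ v ∈ S, v ∈ F := fun v hv => hT v (Finset.mem_filter.mp hv).1
  have hSz_mem : ∀ v ∈ Sz, ∃ s, v.1 = MV.z i s := fun v hv => (Finset.mem_filter.mp hv).2
  have hSa_mem : ∀ v ∈ Sa, v.1 = MV.ax i ∨ v.1 = MV.ay i := by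
    intro v hv
    obtain ⟨hvS, hnP⟩ := Finset.mem_filter.mp hv
    have hcls : cls v = Sum.inl i := (Finset.mem_filter.mp hvS).2
    obtain ⟨w, hw⟩ := v
    cases w <;> simp [cls] at hcls ⊢
    · subst hcls; exact absurd ⟨_, rfl⟩ hnP
    · exact hcls
    · exact hcls
  have hz2 : Sz.card ≤ 2 := by
    by_contra hc
    obtain ⟨a, b, c, ha, hb, hc', hab, hac, hbc⟩ :=
      Finset.two_lt_card_iff.mp (show 2 < Sz.card by omega)
    obtain ⟨sa, hsa⟩ := hSz_mem a ha
    obtain ⟨sb, hsb⟩ := hSz_mem b hb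
    obtain ⟨sc, hsc⟩ := hSz_mem c hc'
    have h1 : sa ≠ sb := fun h => hab (Subtype.ext (by rw [hsa, hsb, h]))
    have h2 : sb ≠ sc := fun h => hbc (Subtype.ext (by rw [hsb, hsc, h]))
    have h3 : sc ≠ sa := fun h => hac (Subtype.ext (by rw [hsa, hsc, h]))
    exact triF hF (hmemF a (Finset.mem_of_mem_filter a ha))
      (hmemF b (Finset.mem_of_mem_filter b hb)) (hmemF c (Finset.mem_of_mem_filter c hc'))
      (adj_zz hsa hsb h1) (adj_zz hsb hsc h2) (adj_zz hsc hsa h3)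
  have hmix : 2 ≤ Sz.card → Sa.card = 0 := by
    intro h2
    by_contra hc
    obtain ⟨α, hα⟩ := Finset.card_pos.mp (show 0 < Sa.card by omega)
    obtain ⟨a, ha, b, hb, hab⟩ := Finset.one_lt_card.mp (show 1 < Sz.card by omega)
    obtain ⟨sa, hsa⟩ := hSz_mem a ha
    obtain ⟨sb, hsb⟩ := hSz_mem b hb
    have h1 : sa ≠ sb := fun h => hab (Subtype.ext (by rw [hsa, hsb, h]))
    exact triF hF (hmemF α (Finset.mem_of_mem_filter α hα))
      (hmemF a (Finset.mem_of_mem_filter a ha)) (hmemF b (Finset.mem_of_mem_filter b hb))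
      (adj_az (hSa_mem α hα) hsa) (adj_zz hsa hsb h1)
      ((adj_az (hSa_mem α hα) hsb).symm)
  have ha2 : Sa.card ≤ 2 := by
    have := Finset.card_le_card_of_injOn
      (fun v => if v.1 = MV.ax i then (0 : Fin 2) else 1)
      (fun a _ => Finset.mem_univ _) ?_ (s := Sa) (t := Finset.univ)
    · simpa using this
    · intro u hu v hv huv
      simp only [Finset.mem_coe] at hu hv
      apply Subtype.ext
      rcases hSa_mem u hu with h | h <;> rcases hSa_mem v hv with h' | h' <;>
        simp [h, h'] at huv ⊢
  omega

lemma fiberR (hF : IsInducedForest G F) (T : Finset (MVert k p G)) (hT : ∀ v ∈ T, v ∈ F)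
    (i j : Fin k) :
    (T.filter (fun v => cls v = Sum.inr (Sum.inl (i, j)))).card ≤ 3 := by
  classical
  set S := T.filter (fun v => cls v = Sum.inr (Sum.inl (i, j))) with hS
  set P : MVert k p G → Prop := fun v => ∃ s t, v.1 = MV.r i j s t with hP
  have key := Finset.card_filter_add_card_filter_not (s := S) (p := P)
  set Sz := S.filter P with hSz
  set Sa := S.filter (fun v => ¬ P v) with hSa
  have hmemF : ∀ v ∈ S, v ∈ F := fun v hv => hT v (Finset.mem_filter.mp hv).1
  have hSz_mem : ∀ v ∈ Sz, ∃ s t, v.1 = MV.r i j s t := fun v hv => (Finset.mem_filter.mp hv).2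
  have hSa_mem : ∀ v ∈ Sa, v.1 = MV.bx i j ∨ v.1 = MV.byy i j := by
    intro v hv
    obtain ⟨hvS, hnP⟩ := Finset.mem_filter.mp hv
    have hcls : cls v = Sum.inr (Sum.inl (i, j)) := (Finset.mem_filter.mp hvS).2
    obtain ⟨w, hw⟩ := v
    cases w <;> simp [cls, Prod.ext_iff] at hcls ⊢
    · obtain ⟨h1, h2⟩ := hcls; subst h1; subst h2; exact absurd ⟨_, _, rfl⟩ hnP
    · exact hcls
    · exact hcls
  have hne_rr : ∀ a ∈ Sz, ∀ b ∈ Sz, a ≠ b → (Gp G).Adj a b := by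
    intro a ha b hb hab
    obtain ⟨sa, ta, hsa⟩ := hSz_mem a ha
    obtain ⟨sb, tb, hsb⟩ := hSz_mem b hb
    have h1 : sa ≠ sb ∨ ta ≠ tb := by
      by_contra h
      push_neg at h
      exact hab (Subtype.ext (by rw [hsa, hsb, h.1, h.2]))
    exact adj_rr hsa hsb h1
  have hz2 : Sz.card ≤ 2 := by
    by_contra hc
    obtain ⟨a, b, c, ha, hb, hc', hab, hac, hbc⟩ :=
      Finset.two_lt_card_iff.mp (show 2 < Sz.card by omega)
    exact triF hF (hmemF a (Finset.mem_of_mem_filter a ha))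
      (hmemF b (Finset.mem_of_mem_filter b hb)) (hmemF c (Finset.mem_of_mem_filter c hc'))
      (hne_rr a ha b hb hab) (hne_rr b hb c hc' hbc) (hne_rr c hc' a ha (Ne.symm hac))
  have hmix : 2 ≤ Sz.card → Sa.card = 0 := by
    intro h2
    by_contra hc
    obtain ⟨α, hα⟩ := Finset.card_pos.mp (show 0 < Sa.card by omega)
    obtain ⟨a, ha, b, hb, hab⟩ := Finset.one_lt_card.mp (show 1 < Sz.card by omega)
    obtain ⟨sa, ta, hsa⟩ := hSz_mem a ha
    obtain ⟨sb, tb, hsb⟩ := hSz_mem b hb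
    exact triF hF (hmemF α (Finset.mem_of_mem_filter α hα))
      (hmemF a (Finset.mem_of_mem_filter a ha)) (hmemF b (Finset.mem_of_mem_filter b hb))
      (adj_br (hSa_mem α hα) hsa) (hne_rr a ha b hb hab)
      ((adj_br (hSa_mem α hα) hsb).symm)
  have ha2 : Sa.card ≤ 2 := by
    have := Finset.card_le_card_of_injOn
      (fun v => if v.1 = MV.bx i j then (0 : Fin 2) else 1)
      (fun a _ => Finset.mem_univ _) ?_ (s := Sa) (t := Finset.univ)
    · simpa using this
    · intro u hu v hv huv
      simp only [Finset.mem_coe] at hu hv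
      apply Subtype.ext
      rcases hSa_mem u hu with h | h <;> rcases hSa_mem v hv with h' | h' <;>
        simp [h, h'] at huv ⊢
  omega

lemma fiberR_zero (T : Finset (MVert k p G)) (i j : Fin k) (hij : ¬ i < j) :
    (T.filter (fun v => cls v = Sum.inr (Sum.inl (i, j)))).card = 0 := by
  classical
  rw [Finset.card_eq_zero, Finset.filter_eq_empty_iff]
  rintro ⟨w, hw⟩ _
  cases w <;> simp [cls, Prod.ext_iff] <;> rintro rfl rfl <;>
    first
    | exact hij hw.1
    | exact hij hw

lemma fiberBeta (T : Finset (MVert k p G)) (hT : ∀ v ∈ T, v ∈ F)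
    (hb : (⟨MV.beta, trivial⟩ : MVert k p G) ∉ F) :
    (T.filter (fun v => cls v = Sum.inr (Sum.inr ()))).card = 0 := by
  classical
  rw [Finset.card_eq_zero, Finset.filter_eq_empty_iff]
  rintro ⟨w, hw⟩ hvT
  cases w <;> simp [cls]
  exact hb (hT _ hvT)

end MyAux

/-- if an induced forest on `k'` vertices contains `z^i_{s_i}`, `z^j_{s_j}`
and `r^{(i,j)}_{t_i,t_j}`, then `s_i = t_i` and `s_j = t_j`. -/
theorem stmt11 (k p : ℕ) (hk : 2 ≤ k) (hp : 1 ≤ p) (G : SimpleGraph (Fin k × Fin p))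
    (F : Set (MVert k p G)) (hF : IsInducedForest G F)
    (hcard : F.ncard = 3 * k + 3 * Nat.choose k 2 + 1)
    (i j : Fin k) (hij : i < j) (si sj ti tj : Fin p)
    (h1 : ∃ v ∈ F, v.1 = MV.z i si) (h2 : ∃ v ∈ F, v.1 = MV.z j sj)
    (h3 : ∃ v ∈ F, v.1 = MV.r i j ti tj) :
    si = ti ∧ sj = tj := by

  classical
  have hfin : F.Finite := by
    by_contra hinf
    have h0 := Set.Infinite.ncard hinf
    omega
  set T := hfin.toFinset with hTdef
  have hT : ∀ v ∈ T, v ∈ F := fun v hv => (Set.Finite.mem_toFinset hfin).mp hv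
  have hTcard : T.card = 3 * k + 3 * Nat.choose k 2 + 1 := by
    rw [← Set.ncard_eq_toFinset_card F hfin]; exact hcard
  have hbeta : (⟨MV.beta, trivial⟩ : MVert k p G) ∈ F := by
    by_contra hb
    have hsum : T.card = ∑ b : Fin k ⊕ (Fin k × Fin k) ⊕ Unit,
        (T.filter (fun v => cls v = b)).card :=
      Finset.card_eq_sum_card_fiberwise (fun x _ => Finset.mem_univ _)
    rw [Fintype.sum_sum_type, Fintype.sum_sum_type] at hsum
    have hZ : ∑ a : Fin k, (T.filter (fun v => cls v = Sum.inl a)).card ≤ 3 * k := by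
      calc ∑ a : Fin k, (T.filter (fun v => cls v = Sum.inl a)).card
          ≤ ∑ _a : Fin k, 3 := Finset.sum_le_sum (fun a _ => fiberZ hF T hT a)
        _ = 3 * k := by simp [mul_comm]
    have hR : ∑ q : Fin k × Fin k, (T.filter (fun v => cls v = Sum.inr (Sum.inl q))).card
        ≤ 3 * Nat.choose k 2 := by
      calc ∑ q : Fin k × Fin k, (T.filter (fun v => cls v = Sum.inr (Sum.inl q))).card
          ≤ ∑ q : Fin k × Fin k, (if q.1 < q.2 then 3 else 0) := by
            apply Finset.sum_le_sum
            rintro ⟨a, b⟩ _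
            by_cases hq : a < b
            · simpa [hq] using fiberR hF T hT a b
            · simp [hq, fiberR_zero T a b hq]
        _ = 3 * Nat.choose k 2 := by
            rw [Finset.sum_ite, Finset.sum_const, Finset.sum_const]
            simp [pairs_card k, mul_comm]
    have hB : ∑ u : Unit, (T.filter (fun v => cls v = Sum.inr (Sum.inr u))).card = 0 := by
      simpa using fiberBeta T hT hb
    omega
  obtain ⟨vz, hvzF, hvz⟩ := h1
  obtain ⟨vz', hvz'F, hvz'⟩ := h2
  obtain ⟨vr, hvrF, hvr⟩ := h3
  constructor
  · by_contra hne
    exact triF hF hbeta hvzF hvrF (adj_beta_z rfl hvz)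
      (adj_zr_fst hvz hvr hne) ((adj_beta_r rfl hvr).symm)
  · by_contra hne
    exact triF hF hbeta hvz'F hvrF (adj_beta_z rfl hvz')
      (adj_zr_snd hvz' hvr hne) ((adj_beta_r rfl hvr).symm)
end
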